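/- Let n ≥ 2 and m ≥ 1, and define E_n = {α ∈ SB_{n+m} : x_j does not divide α for all j with 1 ≤ j ≤ n}. Then E_n is in bijection with SB_m; in particular, E_n has exactly F_{2m−1} elements. -/

import Mathlib

/-- The defining relations of the positive braid monoid `MB_∞` on generators
`x i`, `i : ℕ+`: the braid relations and the far-commutation relations. -/
def BraidRel : FreeMonoid ℕ+ → FreeMonoid ℕ+ → Prop := fun a b =>
  (∃ i : ℕ+, a = FreeMonoid.of (i + 1) * FreeMonoid.of i * FreeMonoid.of (i + 1) ∧
      b = FreeMonoid.of i * FreeMonoid.of (i + 1) * FreeMonoid.of i) ∨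
  (∃ i j : ℕ+, i + 2 ≤ j ∧ a = FreeMonoid.of i * FreeMonoid.of j ∧
      b = FreeMonoid.of j * FreeMonoid.of i)

/-- The congruence generated by the braid relations. -/
def braidCon : Con (FreeMonoid ℕ+) := conGen BraidRel

/-- The positive braid monoid `MB_∞`. -/
abbrev MB : Type := braidCon.Quotient

/-- The generator `x_i` of `MB_∞`, for `i : ℕ+`. -/
def braidGen (i : ℕ+) : MB := braidCon.mk' (FreeMonoid.of i)

/-- The generator `x_i` of `MB_∞`, indexed by a natural number `i ≥ 1`
(junk value `x_1` for `i = 0`). -/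
def X (i : ℕ) : MB := braidGen ⟨max i 1, lt_of_lt_of_le one_pos (le_max_right i 1)⟩

/-- `x_i` divides `β`: `β = δ * x_i * ε` for some `δ ε ∈ MB_∞`. -/
def GenDvd (i : ℕ) (β : MB) : Prop := ∃ δ ε : MB, β = δ * X i * ε

/-- `x_i` left-divides `β`: `β = x_i * ε` for some `ε ∈ MB_∞`. -/
def GenDvdL (i : ℕ) (β : MB) : Prop := ∃ ε : MB, β = X i * ε

/-- `x_i` right-divides `β`: `β = δ * x_i` for some `δ ∈ MB_∞`. -/
def GenDvdR (i : ℕ) (β : MB) : Prop := ∃ δ : MB, β = δ * X i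

/-- The set `SB_n` of simple braids in `MB_n`: products of words in the
generators `x_1, …, x_{n-1}` in which each generator appears at most once. -/
def SB (n : ℕ) : Set MB :=
  {β | ∃ w : List ℕ, w.Nodup ∧ (∀ i ∈ w, 1 ≤ i ∧ i < n) ∧ β = (w.map X).prod}

/-- The simple centralizer `C_n(β)` of `β` in `SB_n`. -/
def C (n : ℕ) (β : MB) : Set MB := {γ ∈ SB n | β * γ = γ * β}

/-- `c_n(β)`, the cardinality of the simple centralizer `C_n(β)`. -/
noncomputable def c (n : ℕ) (β : MB) : ℕ := (C n β).ncard

/-!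
A simple braid is represented by a square-free word in the generators. Length and set of letters
are invariants of the braid relations, so every word representing a simple braid is square-free,
and between square-free words only far commutations `x_i x_j = x_j x_i` apply; these preserve, for
every `a`, the subword in the letters `a` and `a + 1`. Hence a simple braid in `x_s, …, x_{s+k-1}`
is determined by which generators occur and, for each pair of consecutive ones that occur, which
comes first; every such choice is realised, and counting the choices gives `F_{2k+1}` braids,
whatever `s ≥ 1`. As a generator divides a product of generators exactly when it occurs in it,
`E_n` consists of the simple braids in `x_{n+1}, …, x_{n+m-1}` and `SB_m` of those in
`x_1, …, x_{m-1}`, so both have `F_{2m-1}` elements.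
-/

open FreeMonoid

theorem X_eq_mk (i : ℕ) : X i = braidCon.mk' (of i.toPNat') := by
  show braidCon.mk' (of _) = _
  congr 2
  exact PNat.eq (by simp only [PNat.mk_coe, Nat.toPNat'_coe]; split_ifs <;> omega)

theorem prod_map_X_eq_mk (w : List ℕ) :
    (w.map X).prod = braidCon.mk' (ofList (w.map Nat.toPNat')) := by
  induction w with
  | nil => simp
  | cons i w ih => simp [ih, X_eq_mk]

theorem commute_X {i j : ℕ} (hi : 1 ≤ i) (hij : i + 2 ≤ j) : Commute (X i) (X j) := by
  rw [Commute, SemiconjBy, X_eq_mk, X_eq_mk, ← map_mul, ← map_mul]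
  refine braidCon.eq.mpr (ConGen.Rel.of _ _ (Or.inr ⟨_, _, ?_, rfl, rfl⟩))
  rw [← PNat.coe_le_coe]
  simp only [PNat.add_coe, Nat.toPNat'_coe]
  split_ifs <;> simp <;> omega

theorem commute_X_prod {s : ℕ} (hs : 1 ≤ s) {u : List ℕ} (hu : ∀ x ∈ u, s + 2 ≤ x) :
    Commute (X s) (u.map X).prod :=
  Commute.list_prod_right _ _ fun _ hy => by
    obtain ⟨x, hx, rfl⟩ := List.mem_map.mp hy
    exact commute_X hs (hu x hx)

theorem prod_map_X_middle_eq_X_mul {s : ℕ} (hs : 1 ≤ s) {u : List ℕ} (v : List ℕ)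
    (hu : ∀ x ∈ u, s + 2 ≤ x) : ((u ++ s :: v).map X).prod = X s * ((u ++ v).map X).prod := by
  simp only [List.map_append, List.map_cons, List.prod_append, List.prod_cons, ← mul_assoc,
    (commute_X_prod hs hu).eq]

theorem prod_map_X_middle_eq_mul_X {s : ℕ} (hs : 1 ≤ s) (u : List ℕ) {v : List ℕ}
    (hv : ∀ x ∈ v, s + 2 ≤ x) : ((u ++ s :: v).map X).prod = ((u ++ v).map X).prod * X s := by
  simp only [List.map_append, List.map_cons, List.prod_append, List.prod_cons, mul_assoc,
    (commute_X_prod hs hv).eq]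

theorem length_eq_and_mem_iff_of_braidCon {u v : FreeMonoid ℕ+} (h : braidCon u v) :
    u.toList.length = v.toList.length ∧ ∀ x, x ∈ u.toList ↔ x ∈ v.toList := by
  induction h with
  | of a b hab =>
    rcases hab with ⟨i, rfl, rfl⟩ | ⟨i, j, -, rfl, rfl⟩ <;> simp <;> tauto
  | refl => simp
  | symm _ ih => exact ⟨ih.1.symm, fun x => (ih.2 x).symm⟩
  | trans _ _ ih₁ ih₂ => exact ⟨ih₁.1.trans ih₂.1, fun x => (ih₁.2 x).trans (ih₂.2 x)⟩
  | mul _ _ ih₁ ih₂ => simp [ih₁.1, ih₂.1, ih₁.2, ih₂.2]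

theorem nodup_iff_of_braidCon {u v : FreeMonoid ℕ+} (h : braidCon u v) :
    u.toList.Nodup ↔ v.toList.Nodup := by
  obtain ⟨hlen, hmem⟩ := length_eq_and_mem_iff_of_braidCon h
  have hfin : u.toList.toFinset = v.toList.toFinset := by ext x; simp [hmem]
  rw [← Multiset.coe_nodup, ← Multiset.toFinset_card_eq_card_iff_nodup, ← Multiset.coe_nodup,
    ← Multiset.toFinset_card_eq_card_iff_nodup, Multiset.coe_card, Multiset.coe_card]
  change u.toList.toFinset.card = _ ↔ v.toList.toFinset.card = _
  rw [hfin, hlen]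

def pairRestrict (a : ℕ) (w : List ℕ) : List ℕ := w.filter (fun x => x = a ∨ x = a + 1)

theorem mem_pairRestrict_self {a : ℕ} {w : List ℕ} : a ∈ pairRestrict a w ↔ a ∈ w := by
  simp [pairRestrict]

theorem pairRestrict_cons_of_lt {a t : ℕ} (h : a < t) (w : List ℕ) :
    pairRestrict t (a :: w) = pairRestrict t w := by
  simp [pairRestrict, List.filter_cons]; omega

theorem pairRestrict_append_of_lt {a t : ℕ} (h : a < t) (w : List ℕ) :
    pairRestrict t (w ++ [a]) = pairRestrict t w := by
  simp [pairRestrict, List.filter_append]; omega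

theorem pairRestrict_eq_of_braidCon {u v : FreeMonoid ℕ+} (h : braidCon u v)
    (hu : u.toList.Nodup) (a : ℕ) :
    pairRestrict a (u.toList.map (↑)) = pairRestrict a (v.toList.map (↑)) := by
  induction h with
  | of x y hxy =>
    rcases hxy with ⟨i, rfl, rfl⟩ | ⟨i, j, hij, rfl, rfl⟩
    · simp at hu
    · have : (i : ℕ) + 2 ≤ j := by exact_mod_cast hij
      simp only [pairRestrict, toList_mul, toList_of, List.map_cons, List.map_nil,
        List.singleton_append, List.filter_cons, List.filter_nil, decide_eq_true_eq]
      split_ifs <;> first | rfl | omega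
  | refl => rfl
  | symm h ih => exact (ih ((nodup_iff_of_braidCon h).mpr hu)).symm
  | trans h _ ih₁ ih₂ => exact (ih₁ hu).trans (ih₂ ((nodup_iff_of_braidCon h).mp hu))
  | mul _ _ ih₁ ih₂ =>
    simp only [toList_mul, List.nodup_append] at hu
    simp only [toList_mul, List.map_append, pairRestrict, List.filter_append] at ih₁ ih₂ ⊢
    rw [ih₁ hu.1, ih₂ hu.2.1]

theorem genDvd_prod_map_X_iff {j : ℕ} (hj : 1 ≤ j) {w : List ℕ} (hw : ∀ x ∈ w, 1 ≤ x) :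
    GenDvd j (w.map X).prod ↔ j ∈ w := by
  constructor
  · rintro ⟨δ, ε, h⟩
    obtain ⟨d, rfl⟩ := Con.mk'_surjective δ
    obtain ⟨e, rfl⟩ := Con.mk'_surjective ε
    rw [prod_map_X_eq_mk, X_eq_mk, ← map_mul, ← map_mul] at h
    have := ((length_eq_and_mem_iff_of_braidCon (braidCon.eq.mp h)).2 j.toPNat').mpr (by simp)
    obtain ⟨x, hx, hxj⟩ := List.mem_map.mp (by simpa using this)
    have := congrArg PNat.val hxj
    rw [PNat.toPNat'_coe (hw x hx), PNat.toPNat'_coe hj] at this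
    exact this ▸ hx
  · intro h
    obtain ⟨u, v, rfl⟩ := List.append_of_mem h
    exact ⟨(u.map X).prod, (v.map X).prod, by simp [mul_assoc]⟩

theorem pairRestrict_eq_of_prod_eq {w w' : List ℕ} (hw : ∀ x ∈ w, 1 ≤ x)
    (hw' : ∀ x ∈ w', 1 ≤ x) (hnd : w.Nodup) (h : (w.map X).prod = (w'.map X).prod) (a : ℕ) :
    pairRestrict a w = pairRestrict a w' := by
  have map_coe_map_toPNat' : ∀ l : List ℕ, (∀ x ∈ l, 1 ≤ x) → (l.map Nat.toPNat').map (↑) = l :=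
    fun l hl => by
      rw [List.map_map]
      exact (List.map_congr_left fun x hx => PNat.toPNat'_coe (hl x hx)).trans (List.map_id l)
  rw [prod_map_X_eq_mk, prod_map_X_eq_mk] at h
  have hnd' : (w.map Nat.toPNat').Nodup := by
    refine List.Nodup.of_map PNat.val ?_
    rwa [map_coe_map_toPNat' w hw]
  simpa [map_coe_map_toPNat' w hw, map_coe_map_toPNat' w' hw'] using
    pairRestrict_eq_of_braidCon (braidCon.eq.mp h) (by simpa using hnd') a

/- The `t`-th entry of a code read from `s` is `none` if `x_{s+t}` does not occur, `some true` if
`x_{s+t}` occurs to the left of `x_{s+t+1}` (which must then occur), and `some false` otherwise.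
`codes p k` is the set of codes of length `k`, restricted by `p = true` to those whose first
generator occurs. -/
def decode : ℕ → List (Option Bool) → List ℕ
  | _, [] => []
  | s, none :: c => decode (s + 1) c
  | s, some true :: c => s :: decode (s + 1) c
  | s, some false :: c => decode (s + 1) c ++ [s]

def codes : Bool → ℕ → Finset (List (Option Bool))
  | p, 0 => if p then ∅ else {[]}
  | p, k + 1 =>
    ((if p then ∅ else (codes false k).image (none :: ·)) ∪
        (codes false k).image (some false :: ·)) ∪ (codes true k).image (some true :: ·)

def encode : ℕ → ℕ → List ℕ → List (Option Bool)
  | _, 0, _ => []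
  | s, k + 1, w =>
    (if s ∈ w then some (decide (pairRestrict s w = [s, s + 1])) else none) ::
      encode (s + 1) k w

theorem mem_codes_zero {p : Bool} {c : List (Option Bool)} :
    c ∈ codes p 0 ↔ p = false ∧ c = [] := by
  cases p <;> simp [codes]

theorem mem_codes_succ {p : Bool} {k : ℕ} {c : List (Option Bool)} :
    c ∈ codes p (k + 1) ↔ (p = false ∧ ∃ c' ∈ codes false k, c = none :: c') ∨
      (∃ c' ∈ codes false k, c = some false :: c') ∨
      (∃ c' ∈ codes true k, c = some true :: c') := by
  cases p <;> simp [codes, eq_comm]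

theorem codes_true_subset (k : ℕ) : codes true k ⊆ codes false k := by
  cases k <;> simp [codes]

theorem length_of_mem_codes {p : Bool} {k : ℕ} {c : List (Option Bool)}
    (hc : c ∈ codes p k) : c.length = k := by
  induction k generalizing p c with
  | zero => simp [(mem_codes_zero.mp hc).2]
  | succ k ih =>
    rcases mem_codes_succ.mp hc with ⟨-, c', hc', rfl⟩ | ⟨c', hc', rfl⟩ | ⟨c', hc', rfl⟩ <;>
      simp [ih hc']

theorem card_codes (k : ℕ) :
    (codes false k).card = Nat.fib (2 * k + 1) ∧ (codes true k).card = Nat.fib (2 * k) := by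
  have card_image_cons (o : Option Bool) (S : Finset (List (Option Bool))) :
      (S.image (o :: ·)).card = S.card :=
    Finset.card_image_of_injective S List.cons_injective
  induction k with
  | zero => simp [codes]
  | succ k ih =>
    simp only [codes, Bool.false_eq_true, if_false, if_true, Finset.empty_union]
    rw [Finset.card_union_of_disjoint, Finset.card_union_of_disjoint,
      Finset.card_union_of_disjoint]
    · simp only [card_image_cons, ih.1, ih.2, mul_add, Nat.fib_add_two]
      omega
    all_goals
      try rw [Finset.disjoint_union_left]
      simp [Finset.disjoint_left]

theorem bounds_of_mem_decode {s x : ℕ} {c : List (Option Bool)} (hx : x ∈ decode s c) :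
    s ≤ x ∧ x < s + c.length := by
  induction c generalizing s with
  | nil => simp [decode] at hx
  | cons o c ih =>
    have ih' (h : x ∈ decode (s + 1) c) : s ≤ x ∧ x < s + (c.length + 1) := by
      have := ih h; omega
    rcases o with _ | _ | _ <;> simp only [decode, List.mem_cons, List.mem_append,
      List.not_mem_nil, or_false] at hx <;> simp only [List.length_cons]
    · exact ih' hx
    · rcases hx with hx | rfl
      exacts [ih' hx, by omega]
    · rcases hx with rfl | hx
      exacts [by omega, ih' hx]

theorem nodup_decode (s : ℕ) (c : List (Option Bool)) : (decode s c).Nodup := by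
  induction c generalizing s with
  | nil => simp [decode]
  | cons o c ih =>
    have hs : s ∉ decode (s + 1) c := fun h => by have := bounds_of_mem_decode h; omega
    rcases o with _ | _ | _
    · exact ih (s + 1)
    · exact List.nodup_append_comm.mpr (List.nodup_cons.mpr ⟨hs, ih (s + 1)⟩)
    · exact List.nodup_cons.mpr ⟨hs, ih (s + 1)⟩

theorem self_mem_decode {s k : ℕ} {c : List (Option Bool)} (hc : c ∈ codes true k) :
    s ∈ decode s c := by
  cases k with
  | zero => simp [mem_codes_zero] at hc
  | succ k =>
    rcases mem_codes_succ.mp hc with ⟨h, -⟩ | ⟨c', -, rfl⟩ | ⟨c', -, rfl⟩ <;> simp_all [decode]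

theorem encode_congr {s k : ℕ} {w w' : List ℕ}
    (h : ∀ t, s ≤ t → pairRestrict t w = pairRestrict t w') : encode s k w = encode s k w' := by
  induction k generalizing s with
  | zero => rfl
  | succ k ih =>
    have hs : s ∈ w ↔ s ∈ w' := by
      rw [← mem_pairRestrict_self, h s le_rfl, mem_pairRestrict_self]
    simp only [encode, hs, h s le_rfl]
    rw [ih fun t ht => h t (by omega)]

theorem pairRestrict_eq_singleton {s : ℕ} {w : List ℕ} (hw : w.Nodup) (hs : s ∉ w)
    (hs' : s + 1 ∈ w) : pairRestrict s w = [s + 1] := by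
  have : pairRestrict s w = w.filter (· = s + 1) :=
    List.filter_congr fun x hx => by simp; rintro rfl; exact absurd hx hs
  rw [this, List.filter_eq, List.count_eq_one_of_mem hw hs', List.replicate_one]

theorem encode_decode {s k : ℕ} {p : Bool} {c : List (Option Bool)} (hc : c ∈ codes p k) :
    encode s k (decode s c) = c := by
  induction k generalizing s p c with
  | zero => simp [(mem_codes_zero.mp hc).2, encode]
  | succ k ih =>
    have hs (c' : List (Option Bool)) : s ∉ decode (s + 1) c' := fun h => by
      have := bounds_of_mem_decode h; omega
    rcases mem_codes_succ.mp hc with ⟨-, c', hc', rfl⟩ | ⟨c', hc', rfl⟩ | ⟨c', hc', rfl⟩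
    · simp [decode, encode, hs, ih hc']
    · simp only [decode, encode, List.mem_append, List.mem_singleton, or_true, if_true,
        List.cons.injEq, Option.some.injEq]
      refine ⟨decide_eq_false fun h => by simpa [pairRestrict] using congrArg List.getLast? h, ?_⟩
      rw [encode_congr fun t ht => pairRestrict_append_of_lt (by omega) _]
      exact ih hc'
    · simp only [decode, encode, List.mem_cons, true_or, if_true, List.cons.injEq,
        Option.some.injEq]
      have hfilter : pairRestrict s (s :: decode (s + 1) c') =
          s :: pairRestrict s (decode (s + 1) c') := by
        simp [pairRestrict]
      refine ⟨decide_eq_true ?_, ?_⟩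
      · rw [hfilter, pairRestrict_eq_singleton (nodup_decode _ _) (hs c') (self_mem_decode hc')]
      rw [encode_congr fun t ht => pairRestrict_cons_of_lt (by omega) _]
      exact ih hc'

theorem exists_mem_codes_prod_decode_eq {s : ℕ} (hs : 1 ≤ s) (k : ℕ) {l : List ℕ}
    (hl : l.Nodup) (hbound : ∀ x ∈ l, s ≤ x ∧ x < s + k) :
    ∃ c ∈ codes false k, (s ∈ l → c ∈ codes true k) ∧
      ((decode s c).map X).prod = (l.map X).prod := by
  induction k generalizing s l with
  | zero =>
    obtain rfl : l = [] := List.eq_nil_iff_forall_not_mem.mpr fun x hx => by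
      have := hbound x hx; omega
    exact ⟨[], by simp [codes], by simp, rfl⟩
  | succ k ih =>
    by_cases hsl : s ∈ l
    · obtain ⟨u, v, rfl⟩ := List.append_of_mem hsl
      rw [List.nodup_middle, List.nodup_cons] at hl
      have hbound' : ∀ x ∈ u ++ v, s + 1 ≤ x ∧ x < s + 1 + k := fun x hx => by
        have := hbound x (by simp at hx ⊢; tauto)
        have : x ≠ s := by rintro rfl; exact hl.1 hx
        omega
      obtain ⟨c, hc, hc_true, hprod⟩ := ih (by omega) hl.2 hbound'
      by_cases hv : s + 1 ∈ v
      · have hc' : some true :: c ∈ codes true (k + 1) :=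
          mem_codes_succ.mpr (Or.inr (Or.inr ⟨c, hc_true (by simp [hv]), rfl⟩))
        have hu : ∀ x ∈ u, s + 2 ≤ x := fun x hx => by
          have := hbound' x (by simp [hx])
          have : x ≠ s + 1 := by
            rintro rfl; exact List.disjoint_of_nodup_append hl.2 hx hv
          omega
        refine ⟨some true :: c, codes_true_subset _ hc', fun _ => hc', ?_⟩
        rw [prod_map_X_middle_eq_X_mul hs v hu, ← hprod]
        simp [decode]
      · have hc' : some false :: c ∈ codes true (k + 1) :=
          mem_codes_succ.mpr (Or.inr (Or.inl ⟨c, hc, rfl⟩))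
        have hv' : ∀ x ∈ v, s + 2 ≤ x := fun x hx => by
          have := hbound' x (by simp [hx])
          have : x ≠ s + 1 := by rintro rfl; exact hv hx
          omega
        refine ⟨some false :: c, codes_true_subset _ hc', fun _ => hc', ?_⟩
        rw [prod_map_X_middle_eq_mul_X hs u hv', ← hprod]
        simp [decode]
    · have hbound' : ∀ x ∈ l, s + 1 ≤ x ∧ x < s + 1 + k := fun x hx => by
        have := hbound x hx
        have : x ≠ s := by rintro rfl; exact hsl hx
        omega
      obtain ⟨c, hc, -, hprod⟩ := ih (by omega) hl hbound'
      exact ⟨none :: c, mem_codes_succ.mpr (Or.inl ⟨rfl, c, hc, rfl⟩), fun h => absurd h hsl,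
        hprod⟩

def SBOn (s k : ℕ) : Set MB :=
  {β | ∃ w : List ℕ, w.Nodup ∧ (∀ i ∈ w, s ≤ i ∧ i < s + k) ∧ β = (w.map X).prod}

theorem SBOn_eq_image {s : ℕ} (hs : 1 ≤ s) (k : ℕ) :
    SBOn s k =
      (fun c => ((decode s c).map X).prod) '' (codes false k : Set (List (Option Bool))) := by
  ext β
  constructor
  · rintro ⟨w, hw, hbound, rfl⟩
    obtain ⟨c, hc, -, hprod⟩ := exists_mem_codes_prod_decode_eq hs k hw hbound
    exact ⟨c, hc, hprod⟩
  · rintro ⟨c, hc, rfl⟩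
    refine ⟨decode s c, nodup_decode s c, fun x hx => ?_, rfl⟩
    simpa [length_of_mem_codes hc] using bounds_of_mem_decode hx

theorem injOn_prod_decode {s : ℕ} (hs : 1 ≤ s) (k : ℕ) :
    Set.InjOn (fun c => ((decode s c).map X).prod)
      (codes false k : Set (List (Option Bool))) := by
  intro c hc c' hc' h
  have pos (c) : ∀ x ∈ decode s c, 1 ≤ x := fun x hx => by
    have := bounds_of_mem_decode hx; omega
  have hpair := pairRestrict_eq_of_prod_eq (pos c) (pos c') (nodup_decode s c) h
  rw [← encode_decode (s := s) (Finset.mem_coe.mp hc),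
    ← encode_decode (s := s) (Finset.mem_coe.mp hc'), encode_congr fun t _ => hpair t]

theorem ncard_SBOn {s : ℕ} (hs : 1 ≤ s) (k : ℕ) : (SBOn s k).ncard = Nat.fib (2 * k + 1) := by
  rw [SBOn_eq_image hs, (injOn_prod_decode hs k).ncard_image, Set.ncard_coe_finset,
    (card_codes k).1]

theorem SB_eq_SBOn (m : ℕ) : SB m = SBOn 1 (m - 1) := by
  ext β
  simp only [SB, SBOn]
  refine exists_congr fun w => and_congr_right fun _ => and_congr_left fun _ =>
    forall₂_congr fun i _ => ?_
  omega

theorem sep_SB_not_genDvd_eq_SBOn (n m : ℕ) :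
    {α ∈ SB (n + m) | ∀ j : ℕ, 1 ≤ j → j ≤ n → ¬ GenDvd j α} = SBOn (n + 1) (m - 1) := by
  ext α
  simp only [SB, SBOn, Set.mem_ofPred_eq]
  constructor
  · rintro ⟨⟨w, hw, hbound, rfl⟩, hdvd⟩
    refine ⟨w, hw, fun i hi => ?_, rfl⟩
    have hpos : ∀ x ∈ w, 1 ≤ x := fun x hx => (hbound x hx).1
    have : n < i := by
      by_contra! hin
      exact hdvd i (hpos i hi) hin ((genDvd_prod_map_X_iff (hpos i hi) hpos).mpr hi)
    have := hbound i hi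
    omega
  · rintro ⟨w, hw, hbound, rfl⟩
    have hpos : ∀ x ∈ w, 1 ≤ x := fun x hx => by have := hbound x hx; omega
    refine ⟨⟨w, hw, fun i hi => ?_, rfl⟩, fun j hj hjn hdvd => ?_⟩
    · have := hbound i hi; omega
    · have := hbound j ((genDvd_prod_map_X_iff hj hpos).mp hdvd)
      omega

theorem En_equiv_SBm_general (n m : ℕ) (hm : 1 ≤ m) :
    Nonempty
      ({α ∈ SB (n + m) | ∀ j : ℕ, 1 ≤ j → j ≤ n → ¬ GenDvd j α} ≃ SB m) ∧
    ({α ∈ SB (n + m) | ∀ j : ℕ, 1 ≤ j → j ≤ n → ¬ GenDvd j α} : Set MB).ncard =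
      Nat.fib (2 * m - 1) := by
  have hcard : ∀ s, 1 ≤ s → (SBOn s (m - 1)).ncard = Nat.fib (2 * m - 1) := fun s hs => by
    rw [ncard_SBOn hs, show 2 * (m - 1) + 1 = 2 * m - 1 by omega]
  have hpos : Nat.fib (2 * m - 1) ≠ 0 := (Nat.fib_pos.mpr (by omega)).ne'
  rw [sep_SB_not_genDvd_eq_SBOn, SB_eq_SBOn]
  refine ⟨?_, hcard _ (by omega)⟩
  have := (Set.finite_of_ncard_ne_zero ((hcard (n + 1) (by omega)).trans_ne hpos)).to_subtype
  have := (Set.finite_of_ncard_ne_zero ((hcard 1 le_rfl).trans_ne hpos)).to_subtype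
  rw [← Finite.card_eq, Nat.card_coe_set_eq, Nat.card_coe_set_eq, hcard _ (by omega),
    hcard _ le_rfl]

/-- The set `E_n = {α ∈ SB_{n+m} : x_j ∤ α for all 1 ≤ j ≤ n}` is in bijection
with `SB_m`; in particular it has `F_{2m-1}` elements. -/
theorem En_equiv_SBm (n m : ℕ) (hn : 2 ≤ n) (hm : 1 ≤ m) :
    Nonempty
      ({α ∈ SB (n + m) | ∀ j : ℕ, 1 ≤ j → j ≤ n → ¬ GenDvd j α} ≃ SB m) ∧
    ({α ∈ SB (n + m) | ∀ j : ℕ, 1 ≤ j → j ≤ n → ¬ GenDvd j α} : Set MB).ncard =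
      Nat.fib (2 * m - 1) :=
  En_equiv_SBm_general n m hm
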